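/- arXiv:2511.19763 — 2 statements merged into one kernel-verified Lean document; each statement's English description precedes it below -/
import Mathlib

section
/- Let p be a prime number with p ≡ 1 (mod 3). Then there exist positive integers a and b such that p = a² + a·b + b². -/
/-!
A root `c` of `X ^ 2 + X + 1` modulo `p` exists because `3 ∣ p - 1` gives an element of order 3
in `(ZMod p)ˣ`. Thue's pigeonhole argument yields integers `x, y`, not both zero, with
`|x|, |y| ≤ √p` and `x ≡ c y (mod p)`; then `p ∣ x ^ 2 + x y + y ^ 2`, which is positive and
below `3 p`, so it equals `p` (the value `2 p` is ruled out by parity). Since `p` is not a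
square, the symmetries of the form make both variables positive.
-/

theorem FiniteField.exists_sq_add_self_add_one_eq_zero {F : Type*} [Field F] [Fintype F]
    (h : 3 ∣ Fintype.card F - 1) : ∃ c : F, c ^ 2 + c + 1 = 0 := by
  classical
  have : Fact (Nat.Prime 3) := ⟨Nat.prime_three⟩
  obtain ⟨ζ, hζ⟩ : ∃ ζ : Fˣ, orderOf ζ = 3 :=
    exists_prime_orderOf_dvd_card 3 (by rwa [Fintype.card_units])
  have hroot : IsPrimitiveRoot (ζ : F) 3 :=
    IsPrimitiveRoot.coe_units_iff.mpr (by rw [← hζ]; exact IsPrimitiveRoot.orderOf ζ)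
  refine ⟨ζ, ?_⟩
  have hsum := hroot.geom_sum_eq_zero (by norm_num)
  simp only [Finset.sum_range_succ, Finset.sum_range_zero, pow_zero, pow_one, zero_add] at hsum
  linear_combination hsum

theorem ZMod.exists_abs_le_sqrt_intCast_eq_mul (n : ℕ) [NeZero n] (c : ZMod n) :
    ∃ x y : ℤ, (x, y) ≠ (0, 0) ∧ |x| ≤ n.sqrt ∧ |y| ≤ n.sqrt ∧ (x : ZMod n) = c * y := by
  set m := n.sqrt
  have hcard : Fintype.card (ZMod n) < Fintype.card (Fin (m + 1) × Fin (m + 1)) := by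
    simpa [ZMod.card, ← sq] using Nat.lt_succ_sqrt' n
  obtain ⟨⟨a₁, b₁⟩, ⟨a₂, b₂⟩, hne, heq⟩ :=
    Fintype.exists_ne_map_eq_of_card_lt (fun q => (q.1 : ZMod n) - c * q.2) hcard
  have := a₁.is_lt; have := a₂.is_lt; have := b₁.is_lt; have := b₂.is_lt
  refine ⟨(a₁ : ℤ) - a₂, (b₁ : ℤ) - b₂, ?_, abs_le.mpr ⟨by omega, by omega⟩,
    abs_le.mpr ⟨by omega, by omega⟩, ?_⟩
  · intro h0
    simp only [Prod.mk.injEq, sub_eq_zero, Nat.cast_inj, Fin.val_inj] at h0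
    exact hne (Prod.ext h0.1 h0.2)
  · push_cast
    linear_combination heq

theorem Int.four_dvd_of_two_dvd_sq_add_mul_add_sq {x y : ℤ} (h : 2 ∣ x ^ 2 + x * y + y ^ 2) :
    4 ∣ x ^ 2 + x * y + y ^ 2 := by
  rw [← even_iff_two_dvd] at h
  have : Even x ∧ Even y := by
    simp only [Int.even_add, Int.even_mul, Int.even_pow] at h
    tauto
  obtain ⟨⟨u, rfl⟩, ⟨v, rfl⟩⟩ := this
  exact ⟨u ^ 2 + u * v + v ^ 2, by ring⟩

theorem sq_add_mul_add_sq_pos {R : Type*} [CommRing R] [LinearOrder R] [IsStrictOrderedRing R]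
    {x y : R} (h : (x, y) ≠ (0, 0)) : 0 < x ^ 2 + x * y + y ^ 2 := by
  have : x ≠ 0 ∨ y ≠ 0 := by contrapose! h; simp [h.1, h.2]
  rcases this with hx | hy
  · nlinarith [sq_nonneg (x + 2 * y), sq_pos_of_ne_zero hx]
  · nlinarith [sq_nonneg (2 * x + y), sq_pos_of_ne_zero hy]

theorem sq_add_mul_add_sq_le {R : Type*} [CommRing R] [LinearOrder R] [IsStrictOrderedRing R]
    {x y m : R} (hx : |x| ≤ m) (hy : |y| ≤ m) : x ^ 2 + x * y + y ^ 2 ≤ 3 * m ^ 2 := by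
  have h1 : x ^ 2 ≤ m ^ 2 := sq_le_sq' (abs_le.mp hx).1 (abs_le.mp hx).2
  have h2 : y ^ 2 ≤ m ^ 2 := sq_le_sq' (abs_le.mp hy).1 (abs_le.mp hy).2
  have h3 : x * y ≤ m ^ 2 := (le_abs_self _).trans <| by
    rw [abs_mul, sq]; exact mul_le_mul hx hy (abs_nonneg y) ((abs_nonneg x).trans hx)
  linarith

theorem Int.exists_pos_sq_add_mul_add_sq_eq {x y : ℤ} (h : ¬IsSquare (x ^ 2 + x * y + y ^ 2)) :
    ∃ a b : ℤ, 0 < a ∧ 0 < b ∧ x ^ 2 + x * y + y ^ 2 = a ^ 2 + a * b + b ^ 2 := by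
  have hx : x ≠ 0 := by rintro rfl; exact h ⟨y, by ring⟩
  have hy : y ≠ 0 := by rintro rfl; exact h ⟨x, by ring⟩
  have hxy : x + y ≠ 0 := by
    intro h0
    obtain rfl : y = -x := by linarith
    exact h ⟨x, by ring⟩
  -- The form is invariant under `(x, y) ↦ (-x, -y)`, `(y, x)` and `(x + y, -y)`.
  rcases hx.lt_or_gt with hx | hx <;> rcases hy.lt_or_gt with hy | hy
  · exact ⟨-x, -y, by linarith, by linarith, by ring⟩
  · rcases hxy.lt_or_gt with hxy | hxy
    · exact ⟨-(x + y), y, by linarith, hy, by ring⟩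
    · exact ⟨x + y, -x, hxy, by linarith, by ring⟩
  · rcases hxy.lt_or_gt with hxy | hxy
    · exact ⟨-(x + y), x, by linarith, hx, by ring⟩
    · exact ⟨x + y, -y, hxy, by linarith, by ring⟩
  · exact ⟨x, y, hx, hy, rfl⟩

theorem Nat.Prime.exists_int_eq_sq_add_mul_add_sq {p : ℕ} (hp : p.Prime) {c : ZMod p}
    (hc : c ^ 2 + c + 1 = 0) : ∃ x y : ℤ, (p : ℤ) = x ^ 2 + x * y + y ^ 2 := by
  have : NeZero p := ⟨hp.ne_zero⟩
  obtain ⟨x, y, hne, hx, hy, hxy⟩ := ZMod.exists_abs_le_sqrt_intCast_eq_mul p c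
  have hdvd : (p : ℤ) ∣ x ^ 2 + x * y + y ^ 2 := by
    rw [← ZMod.intCast_zmod_eq_zero_iff_dvd]
    push_cast [hxy]
    linear_combination y ^ 2 * hc
  have hsqrt : (p.sqrt : ℤ) ^ 2 < p := by
    have hsq : p.sqrt * p.sqrt ≠ p := fun h => hp.prime.not_isSquare ⟨_, h.symm⟩
    rw [sq]
    exact_mod_cast (Nat.sqrt_le p).lt_of_ne hsq
  have hpos := sq_add_mul_add_sq_pos hne
  have hlt := sq_add_mul_add_sq_le hx hy
  obtain ⟨k, hk⟩ := hdvd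
  have hk0 : 0 < k := pos_of_mul_pos_right (hk ▸ hpos) (by positivity)
  have hk3 : k < 3 := lt_of_mul_lt_mul_left (a := (p : ℤ)) (by linarith) (by positivity)
  interval_cases k
  · exact ⟨x, y, by linarith⟩
  · -- By parity `4 ∣ 2 * p`, so `p = 2`; but `X ^ 2 + X + 1` has no root modulo 2.
    obtain ⟨j, hj⟩ := Int.four_dvd_of_two_dvd_sq_add_mul_add_sq ⟨p, by rw [hk, mul_comm]⟩
    obtain rfl : 2 = p := (Nat.prime_dvd_prime_iff_eq Nat.prime_two hp).mp
      (Int.natCast_dvd_natCast.mp (by omega))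
    exact absurd hc ((by decide : ∀ c : ZMod 2, c ^ 2 + c + 1 ≠ 0) c)

theorem exists_pos_quadratic_form (p : ℕ) (hp : p.Prime) (h : p % 3 = 1) :
    ∃ a b : ℕ, 0 < a ∧ 0 < b ∧ p = a ^ 2 + a * b + b ^ 2 := by
  have : Fact p.Prime := ⟨hp⟩
  obtain ⟨c, hc⟩ := FiniteField.exists_sq_add_self_add_one_eq_zero (F := ZMod p)
    (by rw [ZMod.card]; omega)
  obtain ⟨x, y, hxy⟩ := hp.exists_int_eq_sq_add_mul_add_sq hc
  obtain ⟨a, b, ha, hb, hab⟩ :=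
    Int.exists_pos_sq_add_mul_add_sq_eq (hxy ▸ (Nat.prime_iff_prime_int.mp hp).not_isSquare)
  lift a to ℕ using ha.le
  lift b to ℕ using hb.le
  exact ⟨a, b, by exact_mod_cast ha, by exact_mod_cast hb, by exact_mod_cast hxy.trans hab⟩
end

section
/- Let p be a prime number with p > 3 and p ≡ 1 (mod 3). Then there exist positive integers x and z such that p = 3x² + 3x·z + z². -/
/-!
A primitive cube root of unity `w` modulo `p` gives the square root `c = 2w + 1` of `-3`.
Thue's pigeonhole lemma then yields small `a, b`, not both zero, with `a ≡ c b`, so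
`a² + 3b² = kp` with `0 < k < 4`; `k = 2` is impossible modulo `4` and `k = 3` forces `3 ∣ a`,
so `p = u² + 3v²`.
Finally `u² + 3v² = 3x² + 3xz + z²` for `(x, z) = (v - u, 2u)`, `(u - v, 3v - u)` or
`(2v, u - 3v)`, whichever is positive.
-/

theorem ZMod.exists_sq_eq_neg_three {p : ℕ} [Fact p.Prime] (h : p % 3 = 1) :
    ∃ c : ZMod p, c ^ 2 = -3 := by
  have h3 : 3 ∣ Fintype.card (ZMod p)ˣ := by
    rw [ZMod.card_units]; omega
  obtain ⟨g, hg⟩ := exists_prime_orderOf_dvd_card 3 h3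
  set w : ZMod p := (g : ZMod p)
  have hw3 : w ^ 3 = 1 := by
    rw [← Units.val_pow_eq_pow_val, ← hg, pow_orderOf_eq_one, Units.val_one]
  have hw1 : w ≠ 1 := fun hw => by
    simp [Units.val_eq_one.mp hw] at hg
  have hw : w ^ 2 + w + 1 = 0 := by
    have : (w - 1) * (w ^ 2 + w + 1) = 0 := by linear_combination hw3
    exact (mul_eq_zero.mp this).resolve_left (sub_ne_zero.mpr hw1)
  exact ⟨2 * w + 1, by linear_combination 4 * hw⟩

/-- Thue's lemma. -/
theorem ZMod.exists_natAbs_le_sqrt_intCast_eq_mul {n : ℕ} [NeZero n] (c : ZMod n) :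
    ∃ a b : ℤ, (a ≠ 0 ∨ b ≠ 0) ∧ a.natAbs ≤ n.sqrt ∧ b.natAbs ≤ n.sqrt ∧
      (a : ZMod n) = c * b := by
  set m := n.sqrt
  have hcard : (Finset.univ : Finset (ZMod n)).card <
      (Finset.range (m + 1) ×ˢ Finset.range (m + 1)).card := by
    rw [Finset.card_univ, ZMod.card, Finset.card_product, Finset.card_range, ← sq]
    exact Nat.lt_succ_sqrt' n
  obtain ⟨q, hq, q', hq', hne, heq⟩ := Finset.exists_ne_map_eq_of_card_lt_of_maps_to hcard
    (f := fun q : ℕ × ℕ => (q.1 : ZMod n) - c * q.2) (fun _ _ => Finset.mem_univ _)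
  simp only [Finset.mem_product, Finset.mem_range] at hq hq'
  refine ⟨q.1 - q'.1, q.2 - q'.2, ?_, by omega, by omega, ?_⟩
  · by_contra! h0
    exact hne (Prod.ext (by omega) (by omega))
  · push_cast
    linear_combination heq

theorem Nat.sq_add_three_mul_sq_mod_four_ne_two (a b : ℕ) : (a ^ 2 + 3 * b ^ 2) % 4 ≠ 2 := by
  rcases Nat.even_or_odd a with ⟨k, rfl⟩ | ⟨k, rfl⟩ <;>
    rcases Nat.even_or_odd b with ⟨l, rfl⟩ | ⟨l, rfl⟩ <;> ring_nf <;> omega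

theorem Nat.Prime.exists_sq_add_three_mul_sq_eq_of_dvd {p a b : ℕ} (hp : p.Prime) (hp2 : p ≠ 2)
    (hdvd : p ∣ a ^ 2 + 3 * b ^ 2) (hpos : 0 < a ^ 2 + 3 * b ^ 2)
    (hlt : a ^ 2 + 3 * b ^ 2 < 4 * p) :
    ∃ u v : ℕ, u ^ 2 + 3 * v ^ 2 = p := by
  obtain ⟨k, hk⟩ := hdvd
  have hk0 : 0 < k := Nat.pos_of_ne_zero (by rintro rfl; omega)
  have hk4 : k < 4 := by nlinarith
  interval_cases k
  · exact ⟨a, b, by omega⟩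
  · have hmod := Nat.sq_add_three_mul_sq_mod_four_ne_two a b
    have hodd := Nat.odd_iff.mp (hp.odd_of_ne_two hp2)
    omega
  · have h3 : 3 ∣ a ^ 2 := by omega
    obtain ⟨a', rfl⟩ := Nat.prime_three.dvd_of_dvd_pow h3
    exact ⟨b, a', by linarith⟩

theorem Nat.Prime.exists_sq_add_three_mul_sq_eq {p : ℕ} (hp : p.Prime) (h : p % 3 = 1) :
    ∃ u v : ℕ, u ^ 2 + 3 * v ^ 2 = p := by
  have := Fact.mk hp
  obtain ⟨c, hc⟩ := ZMod.exists_sq_eq_neg_three h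
  obtain ⟨a, b, hne, ha, hb, hab⟩ := ZMod.exists_natAbs_le_sqrt_intCast_eq_mul c
  have hsqrt : p.sqrt ^ 2 < p :=
    (Nat.sqrt_le' p).lt_of_ne fun hsq => Nat.Prime.not_prime_pow le_rfl (hsq ▸ hp)
  refine hp.exists_sq_add_three_mul_sq_eq_of_dvd (a := a.natAbs) (b := b.natAbs) (by omega) ?_ ?_ ?_
  · have hcast : ((a.natAbs ^ 2 + 3 * b.natAbs ^ 2 : ℕ) : ℤ) = a ^ 2 + 3 * b ^ 2 := by
      simp [sq_abs]
    rw [← Int.natCast_dvd_natCast, hcast, ← ZMod.intCast_zmod_eq_zero_iff_dvd]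
    push_cast
    rw [hab]
    linear_combination (b : ZMod p) ^ 2 * hc
  · rcases hne with ha0 | hb0
    · have := Int.natAbs_pos.mpr ha0; positivity
    · have := Int.natAbs_pos.mpr hb0; positivity
  · nlinarith [Nat.pow_le_pow_left ha 2, Nat.pow_le_pow_left hb 2]

theorem exists_three_mul_sq_add_three_mul_mul_add_sq_eq {u v : ℕ} (hu : 0 < u) (hv : 0 < v)
    (huv : u ≠ v) (hu3 : u ≠ 3 * v) :
    ∃ x z : ℕ, 0 < x ∧ 0 < z ∧ u ^ 2 + 3 * v ^ 2 = 3 * x ^ 2 + 3 * x * z + z ^ 2 := by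
  rcases huv.lt_or_gt with huv | huv
  · obtain ⟨d, rfl⟩ := Nat.exists_eq_add_of_lt huv
    exact ⟨d + 1, 2 * u, by omega, by omega, by ring⟩
  · obtain ⟨x, rfl⟩ := Nat.exists_eq_add_of_lt huv
    rcases (show x + 1 ≠ 2 * v by omega).lt_or_gt with hx | hx
    · obtain ⟨z, hz⟩ := Nat.exists_eq_add_of_lt hx
      refine ⟨x + 1, z + 1, by omega, by omega, ?_⟩
      zify at hz ⊢
      linear_combination (2 * v + 2 * (x + 1) + (z + 1) : ℤ) * hz
    · obtain ⟨z, hz⟩ := Nat.exists_eq_add_of_lt hx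
      obtain rfl : x = 2 * v + z := by omega
      exact ⟨2 * v, z + 1, by omega, by omega, by ring⟩

theorem exists_rep_three_x_sq_general (p : ℕ) (hp : p.Prime) (h : p % 3 = 1) :
    ∃ x z : ℕ, 0 < x ∧ 0 < z ∧ p = 3 * x ^ 2 + 3 * x * z + z ^ 2 := by
  obtain ⟨u, v, rfl⟩ := hp.exists_sq_add_three_mul_sq_eq h
  refine exists_three_mul_sq_add_three_mul_mul_add_sq_eq ?_ ?_ ?_ ?_
  · refine Nat.pos_of_ne_zero ?_
    rintro rfl
    simp at h
  · refine Nat.pos_of_ne_zero ?_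
    rintro rfl
    rw [zero_pow two_ne_zero, mul_zero, add_zero] at hp
    exact Nat.Prime.not_prime_pow le_rfl hp
  · rintro rfl
    have := hp.eq_one_or_self_of_dvd 2 (by omega)
    omega
  · rintro rfl
    rw [mul_pow] at h
    omega

theorem exists_rep_three_x_sq (p : ℕ) (hp : p.Prime) (hp3 : 3 < p) (h : p % 3 = 1) :
    ∃ x z : ℕ, 0 < x ∧ 0 < z ∧ p = 3 * x ^ 2 + 3 * x * z + z ^ 2 :=
  exists_rep_three_x_sq_general p hp h
end
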